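/- If ρ is a state on ℂ²⊗ℂ² and ρ' = Σⱼ √Ōⱼ ρ √Ōⱼ is the post-measurement state under the unsharp POVM {Ōⱼ} of sharpness λ (all Ōⱼ diagonal in the computational basis as in the ensemble χ₂ protocol), then Tr[σ₂⊗σ₂ ρ'] = (1−λ²) Tr[σ₂⊗σ₂ ρ]. -/
import Mathlib


open scoped BigOperators Matrix Kronecker ComplexOrder

namespace SSDSE16

noncomputable def sigma2 : Matrix (Fin 2) (Fin 2) ℂ := !![0, -Complex.I; Complex.I, 0]

/-- Entrywise square root of the diagonal POVM element with (1+λ)²/4 weight on |ab⟩,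
(1−λ)²/4 on the bit-flipped state and (1−λ²)/4 on the other two basis states. -/
noncomputable def sqrtObar (lam : ℝ) (a b : Fin 2) :
    Matrix (Fin 2 × Fin 2) (Fin 2 × Fin 2) ℂ :=
  Matrix.diagonal (fun p =>
    if p = (a, b) then (((1 + lam) / 2 : ℝ) : ℂ)
    else if p = (1 - a, 1 - b) then (((1 - lam) / 2 : ℝ) : ℂ)
    else ((Real.sqrt (1 - lam^2) / 2 : ℝ) : ℂ))

/-- The post-measurement map ρ ↦ Σⱼ √Ōⱼ ρ √Ōⱼ (the four elements being weighted on
|01⟩, |00⟩, |10⟩, |11⟩ respectively). -/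
noncomputable def postState (lam : ℝ)
    (ρ : Matrix (Fin 2 × Fin 2) (Fin 2 × Fin 2) ℂ) :
    Matrix (Fin 2 × Fin 2) (Fin 2 × Fin 2) ℂ :=
  sqrtObar lam 0 1 * ρ * sqrtObar lam 0 1 + sqrtObar lam 0 0 * ρ * sqrtObar lam 0 0
    + sqrtObar lam 1 0 * ρ * sqrtObar lam 1 0 + sqrtObar lam 1 1 * ρ * sqrtObar lam 1 1

theorem sigma2_correlation_decay (lam : ℝ) (hlam : lam ∈ Set.Icc (0:ℝ) 1)
    (ρ : Matrix (Fin 2 × Fin 2) (Fin 2 × Fin 2) ℂ)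
    (hρ : ρ.PosSemidef) (htr : ρ.trace = 1) :
    ((sigma2 ⊗ₖ sigma2) * postState lam ρ).trace
      = (((1 - lam^2 : ℝ)) : ℂ) * ((sigma2 ⊗ₖ sigma2) * ρ).trace := by
  obtain ⟨h0, h1⟩ := hlam
  have hs : (Real.sqrt (1 - lam^2) : ℂ) * (Real.sqrt (1 - lam^2) : ℂ) = ((1 - lam^2 : ℝ) : ℂ) := by
    rw [← Complex.ofReal_mul, Real.mul_self_sqrt (by nlinarith)]
  simp only [postState, sqrtObar, sigma2, Matrix.trace, Matrix.diag, Matrix.mul_apply,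
    Matrix.add_apply, Matrix.kroneckerMap_apply, Matrix.diagonal_apply, Fintype.sum_prod_type,
    Fin.sum_univ_two, Prod.mk.injEq]
  norm_num [Matrix.cons_val_zero, Matrix.cons_val_one, Matrix.head_cons, Matrix.head_fin_const,
    Fin.one_eq_zero_iff, sub_eq_iff_eq_add]
  have hs2 : ((Real.sqrt (1 - lam^2) : ℝ) : ℂ)^2 = ((1 - lam^2 : ℝ) : ℂ) := by
    rw [sq]; exact hs
  ring_nf
  rw [hs2]
  push_cast
  ring

end SSDSE16
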